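/- For p ≠ 1/2, the law μ_n^p of the stabilization time on {0,1}^n with i.i.d. Bernoulli(p) bits satisfies μ_n^p = ((p^{n+1} − (1−p)^{n+1})/(2p−1))·δ_0 + Σ_{r=0}^{n−2} (((1−p)p^{n−r} − p(1−p)^{n−r})/(2p−1))·μ̃_{r+2}^p, where μ̃_m^p is the law of the stabilization time on strings starting with 0 and ending with 1 whose middle m−2 bits are i.i.d. Bernoulli(p). -/

import Mathlib

open Finset

/-- The k-th bit of a string of length `n`, padded with `false` out of range. -/
def bit (n : ℕ) (ω : Fin n → Bool) (k : ℕ) : Bool :=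
  if h : k < n then ω ⟨k, h⟩ else false

/-- One step of the evolution: every occurrence of "01" is replaced by "10"
(simultaneously).  `E(ω)_i = 1` iff `(ω_i = 1 ∧ ¬(i ≥ 2 ∧ ω_{i-1} = 0)) ∨
(ω_i = 0 ∧ i < n ∧ ω_{i+1} = 1)` (1-indexed; here 0-indexed). -/
def evolve (n : ℕ) (ω : Fin n → Bool) : Fin n → Bool :=
  fun i =>
    (bit n ω i.val && !(decide (0 < i.val) && !bit n ω (i.val - 1)))
      || (!bit n ω i.val && bit n ω (i.val + 1))

/-- A string is stable iff it contains no occurrence of "01". -/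
def IsStable (n : ℕ) (ω : Fin n → Bool) : Prop :=
  ∀ k : ℕ, ¬(bit n ω k = false ∧ bit n ω (k + 1) = true)

/-- The stabilization time: the least number of applications of `evolve`
after which the string is stable. -/
noncomputable def stabTime (n : ℕ) (ω : Fin n → Bool) : ℕ :=
  sInf {m : ℕ | IsStable n ((evolve n)^[m] ω)}

/-- The Bernoulli(p) weight of a string. -/
def weight (p : ℝ) (n : ℕ) (ω : Fin n → Bool) : ℝ :=
  ∏ i, (if ω i then p else 1 - p)

/-- The string `0 x 1` of length `r + 2` obtained by surrounding `x` with a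
leading 0 and a trailing 1. -/
def special (r : ℕ) (x : Fin r → Bool) : Fin (r + 2) → Bool :=
  fun i =>
    if _h0 : i.val = 0 then false
    else if h : i.val ≤ r then x ⟨i.val - 1, by omega⟩
    else true

/-!
Cutting a string at its first `0` and its last `1` shows that it is either stable, i.e.
`1^a 0^(n-a)`, or uniquely of the form `1^a 0 x 1 0^b` with `x` of length `n - a - b - 2`. Leading
ones and trailing zeros never move under the evolution, so the stabilization time of
`1^a 0 x 1 0^b` is that of `0 x 1`, while its Bernoulli weight is `p^a (1-p)^b` times the weight
of `0 x 1`. Summing over `a + b = m` gives `∑ p^a (1-p)^b = (p^(m+1) - (1-p)^(m+1)) / (2p - 1)`,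
which produces both coefficients.
-/

section Bits

variable {n : ℕ}

lemma bit_val (ω : Fin n → Bool) (i : Fin n) : bit n ω i = ω i := by
  simp [bit]

lemma bit_of_le (ω : Fin n → Bool) {k : ℕ} (hk : n ≤ k) : bit n ω k = false := by
  simp [bit, not_lt.2 hk]

lemma ext_bit {ω ω' : Fin n → Bool} (h : ∀ k, bit n ω k = bit n ω' k) : ω = ω' :=
  funext fun i => by simpa only [bit_val] using h i

lemma bit_evolve (ω : Fin n → Bool) (k : ℕ) :
    bit n (evolve n ω) k =
      ((bit n ω k && !(decide (0 < k) && !bit n ω (k - 1)))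
        || (!bit n ω k && bit n ω (k + 1))) := by
  by_cases hk : k < n
  · exact bit_val (evolve n ω) ⟨k, hk⟩
  · simp [bit_of_le _ (not_lt.1 hk), bit_of_le ω (by omega : n ≤ k + 1)]

lemma IsStable.antitone {ω : Fin n → Bool} (h : IsStable n ω) : Antitone (bit n ω) := by
  refine antitone_nat_of_succ_le fun k => ?_
  cases h0 : bit n ω k
  · cases h1 : bit n ω (k + 1)
    · exact le_rfl
    · exact (h k ⟨h0, h1⟩).elim
  · exact Bool.le_true _

lemma isStable_zero (w : Fin 0 → Bool) : IsStable 0 w :=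
  fun k hk => by simpa [bit_of_le w (Nat.zero_le (k + 1))] using hk.2

end Bits

section Pad

variable {n a m : ℕ}

/-- The string `1^a w 0^(n-a-m)`; the trailing zeros come from the padding in `bit`. -/
def pad (n a m : ℕ) (w : Fin m → Bool) : Fin n → Bool :=
  fun i => if i.val < a then true else bit m w (i.val - a)

lemma bit_pad (h : a + m ≤ n) (w : Fin m → Bool) (k : ℕ) :
    bit n (pad n a m w) k = if k < a then true else bit m w (k - a) := by
  by_cases hk : k < n
  · exact bit_val (pad n a m w) ⟨k, hk⟩
  · rw [bit_of_le _ (not_lt.1 hk), if_neg (by omega), bit_of_le w (by omega)]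

lemma evolve_pad (h : a + m ≤ n) (w : Fin m → Bool) :
    evolve n (pad n a m w) = pad n a m (evolve m w) := by
  refine ext_bit fun k => ?_
  simp only [bit_evolve, bit_pad h]
  rcases lt_or_ge k a with hk | hk
  · simp [hk, show k - 1 < a by omega]
  obtain ⟨j, rfl⟩ := Nat.exists_eq_add_of_le hk
  rcases j with _ | j
  · rcases a with _ | a <;> simp
  · simp [show a + (j + 1) - 1 = a + j by omega, show a + (j + 1) + 1 = a + (j + 2) by omega]

lemma iterate_evolve_pad (h : a + m ≤ n) (w : Fin m → Bool) (s : ℕ) :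
    (evolve n)^[s] (pad n a m w) = pad n a m ((evolve m)^[s] w) := by
  induction s generalizing w with
  | zero => rfl
  | succ s ih => rw [Function.iterate_succ_apply, Function.iterate_succ_apply, evolve_pad h, ih]

lemma isStable_pad_iff (h : a + m ≤ n) (w : Fin m → Bool) :
    IsStable n (pad n a m w) ↔ IsStable m w := by
  refine ⟨fun hs k hk => hs (a + k) ?_, fun hs k hk => ?_⟩
  · simpa [bit_pad h, show a + k + 1 = a + (k + 1) by omega] using hk
  · rw [bit_pad h, bit_pad h] at hk
    rcases lt_or_ge k a with hka | hka
    · simp [hka] at hk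
    · rw [if_neg (by omega), if_neg (by omega), show k + 1 - a = k - a + 1 by omega] at hk
      exact hs (k - a) hk

lemma stabTime_pad (h : a + m ≤ n) (w : Fin m → Bool) :
    stabTime n (pad n a m w) = stabTime m w := by
  simp only [stabTime, iterate_evolve_pad h, isStable_pad_iff h]

end Pad

lemma weight_eq_prod_range (p : ℝ) (n : ℕ) (ω : Fin n → Bool) :
    weight p n ω = ∏ k ∈ range n, if bit n ω k then p else 1 - p := by
  rw [weight, ← Fin.prod_univ_eq_prod_range (fun k => if bit n ω k then p else 1 - p)]
  simp only [bit_val]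

lemma weight_pad {n a m : ℕ} (h : a + m ≤ n) (w : Fin m → Bool) (p : ℝ) :
    weight p n (pad n a m w) = p ^ a * weight p m w * (1 - p) ^ (n - a - m) := by
  rw [weight_eq_prod_range, weight_eq_prod_range,
    show range n = range (a + (m + (n - a - m))) by congr 1; omega, prod_range_add, prod_range_add]
  have hones : ∀ k ∈ range a, (if bit n (pad n a m w) k then p else 1 - p) = p := fun k hk => by
    rw [bit_pad h, if_pos (mem_range.1 hk), if_pos rfl]
  have hmid : ∀ k ∈ range m, (if bit n (pad n a m w) (a + k) then p else 1 - p) =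
      if bit m w k then p else 1 - p := fun k _ => by
    rw [bit_pad h, if_neg (by omega : ¬ a + k < a), Nat.add_sub_cancel_left]
  have hzeros : ∀ k ∈ range (n - a - m),
      (if bit n (pad n a m w) (a + (m + k)) then p else 1 - p) = 1 - p := fun k _ => by
    rw [bit_pad h, if_neg (by omega : ¬ a + (m + k) < a), Nat.add_sub_cancel_left,
      bit_of_le w (Nat.le_add_right m k), if_neg Bool.false_ne_true]
  rw [prod_congr rfl hones, prod_congr rfl hmid, prod_congr rfl hzeros, prod_const, prod_const,
    card_range, card_range, mul_assoc]

section Special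

variable {r : ℕ} (x : Fin r → Bool)

lemma bit_special (k : ℕ) :
    bit (r + 2) (special r x) k =
      if k = 0 then false else if k = r + 1 then true else bit r x (k - 1) := by
  by_cases hk : k < r + 2
  · refine (bit_val (special r x) ⟨k, hk⟩).trans ?_
    simp only [special]
    split_ifs <;> first | rfl | omega | simp [bit, show k - 1 < r by omega]
  · rw [bit_of_le _ (by omega), if_neg (by omega), if_neg (by omega), bit_of_le _ (by omega)]

lemma weight_special (p : ℝ) : weight p (r + 2) (special r x) = (1 - p) * weight p r x * p := by
  have hmid : ∀ k ∈ range r, (if bit (r + 2) (special r x) (k + 1) then p else 1 - p) =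
      if bit r x k then p else 1 - p := fun k hk => by
    have hkr : k + 1 ≠ r + 1 := by simp [(mem_range.1 hk).ne]
    rw [bit_special, if_neg k.succ_ne_zero, if_neg hkr, Nat.add_sub_cancel]
  rw [weight_eq_prod_range, weight_eq_prod_range, prod_range_succ', prod_range_succ,
    prod_congr rfl hmid]
  simp only [bit_special, if_pos, if_neg r.succ_ne_zero, Bool.false_eq_true, if_false]
  ring

lemma not_isStable_special : ¬ IsStable (r + 2) (special r x) := fun h => by
  have hmono := h.antitone (Nat.zero_le (r + 1))
  rw [bit_special, bit_special, if_pos rfl, if_neg r.succ_ne_zero, if_pos rfl] at hmono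
  exact absurd hmono (by decide)

lemma bit_pad_special {n a : ℕ} (h : a + (r + 2) ≤ n) (k : ℕ) :
    bit n (pad n a (r + 2) (special r x)) k =
      if k < a then true else if k = a then false else if k = a + r + 1 then true
      else bit r x (k - a - 1) := by
  rw [bit_pad h, bit_special]
  split_ifs <;> first | rfl | omega

end Special

section Decomposition

variable {n : ℕ}

lemma exists_first_zero (ω : Fin n → Bool) :
    ∃ a ≤ n, (∀ k < a, bit n ω k = true) ∧ bit n ω a = false := by
  have hzero : ∃ k, bit n ω k = false := ⟨n, bit_of_le ω le_rfl⟩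
  exact ⟨Nat.find hzero, Nat.find_min' hzero (bit_of_le ω le_rfl),
    fun k hk => by simpa using Nat.find_min hzero hk, Nat.find_spec hzero⟩

lemma IsStable.exists_eq_pad {ω : Fin n → Bool} (h : IsStable n ω) :
    ∃ a ≤ n, ω = pad n a 0 Fin.elim0 := by
  obtain ⟨a, han, hones, hzero⟩ := exists_first_zero ω
  refine ⟨a, han, ext_bit fun k => ?_⟩
  rw [bit_pad (by omega), bit_of_le Fin.elim0 (Nat.zero_le _)]
  split_ifs with hk
  · exact hones k hk
  · exact Bool.eq_false_of_le_false (hzero ▸ h.antitone (not_lt.1 hk))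

lemma exists_eq_pad_special_of_not_isStable {ω : Fin n → Bool} (h : ¬ IsStable n ω) :
    ∃ r a, ∃ x : Fin r → Bool, a + (r + 2) ≤ n ∧ ω = pad n a (r + 2) (special r x) := by
  obtain ⟨k, hk0, hk1⟩ : ∃ k, bit n ω k = false ∧ bit n ω (k + 1) = true := by
    simpa [IsStable] using h
  obtain ⟨a, -, hones, hzero⟩ := exists_first_zero ω
  have hkn : k + 1 < n := by
    by_contra! hc
    simp [bit_of_le ω hc] at hk1
  set L := Nat.findGreatest (fun j => bit n ω j = true) n
  have hL : bit n ω L = true :=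
    Nat.findGreatest_spec (P := fun j => bit n ω j = true) hkn.le hk1
  have hkL : k + 1 ≤ L := Nat.le_findGreatest hkn.le hk1
  have hLn : L < n := by
    by_contra! hc
    simp [bit_of_le ω hc] at hL
  have hzeros : ∀ j, L < j → bit n ω j = false := fun j hj => by
    rcases le_or_gt j n with hjn | hjn
    · simpa using Nat.findGreatest_is_greatest hj hjn
    · exact bit_of_le ω hjn.le
  have hak : a ≤ k := by
    by_contra! hc
    simp [hones k hc] at hk0
  refine ⟨L - a - 1, a, fun i => bit n ω (a + 1 + i), by omega, ext_bit fun j => ?_⟩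
  rw [bit_pad_special _ (by omega)]
  split_ifs with h1 h2 h3
  · exact hones j h1
  · exact h2 ▸ hzero
  · exact (show j = L by omega) ▸ hL
  · rcases lt_or_gt_of_ne h3 with hj | hj
    · simp [bit, show j - a - 1 < L - a - 1 by omega, show a + 1 + (j - a - 1) = j by omega]
    · rw [hzeros j (by omega), bit_of_le _ (by omega)]

end Decomposition

section Injectivity

variable {n : ℕ}

lemma pad_nil_inj {a a' : ℕ} (ha : a ≤ n) (ha' : a' ≤ n)
    (h : pad n a 0 Fin.elim0 = pad n a' 0 Fin.elim0) : a = a' := by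
  refine eq_of_forall_lt_iff fun k => ?_
  have hk := congrArg (fun ω => bit n ω k) h
  simpa [bit_pad (by omega : a + 0 ≤ n), bit_pad (by omega : a' + 0 ≤ n),
    bit_of_le Fin.elim0 (Nat.zero_le _)] using hk

lemma pad_special_inj {r r' a a' : ℕ} {x : Fin r → Bool} {x' : Fin r' → Bool}
    (h : a + (r + 2) ≤ n) (h' : a' + (r' + 2) ≤ n)
    (heq : pad n a (r + 2) (special r x) = pad n a' (r' + 2) (special r' x')) :
    (⟨r, a, x⟩ : Σ r, ℕ × (Fin r → Bool)) = ⟨r', a', x'⟩ := by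
  have hbit (k : ℕ) := congrArg (fun ω => bit n ω k) heq
  simp only [bit_pad_special _ h, bit_pad_special _ h'] at hbit
  obtain rfl : a = a' := by
    by_contra hne
    rcases lt_or_gt_of_ne hne with hlt | hlt
    · simpa [hlt] using hbit a
    · simpa [hlt] using hbit a'
  obtain rfl : r = r' := by
    by_contra hne
    rcases lt_or_gt_of_ne hne with hlt | hlt
    · simpa [Ne.symm hne, show a + r' + 1 - a - 1 = r' by omega, bit_of_le x hlt.le,
        show a + r' + 1 ≠ a by omega, show ¬ a + r' + 1 < a by omega] using hbit (a + r' + 1)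
    · simpa [hne, show a + r + 1 - a - 1 = r by omega, bit_of_le x' hlt.le,
        show a + r + 1 ≠ a by omega, show ¬ a + r + 1 < a by omega] using hbit (a + r + 1)
  have hx : x = x' := ext_bit fun k => by
    by_cases hk : k < r
    · simpa [show a + 1 + k - a - 1 = k by omega, show a + 1 + k ≠ a + r + 1 by omega,
        show a + 1 + k ≠ a by omega, show ¬ a + 1 + k < a by omega] using hbit (a + 1 + k)
    · rw [bit_of_le x (not_lt.1 hk), bit_of_le x' (not_lt.1 hk)]
  rw [hx]

end Injectivity

section Reindexing

variable {n : ℕ} [DecidablePred (IsStable n)] {M : Type*} [AddCommMonoid M]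

lemma sum_filter_isStable_eq (F : (Fin n → Bool) → M) :
    ∑ ω ∈ univ.filter (IsStable n), F ω = ∑ a ∈ range (n + 1), F (pad n a 0 Fin.elim0) := by
  refine (sum_bij (fun a _ => pad n a 0 Fin.elim0) (fun a ha => ?_) (fun a ha a' ha' h => ?_)
    (fun ω hω => ?_) fun _ _ => rfl).symm
  · exact mem_filter.2 ⟨mem_univ _,
      (isStable_pad_iff (Nat.lt_succ_iff.1 (mem_range.1 ha)) _).2 (isStable_zero _)⟩
  · exact pad_nil_inj (Nat.lt_succ_iff.1 (mem_range.1 ha)) (Nat.lt_succ_iff.1 (mem_range.1 ha')) h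
  · obtain ⟨a, ha, rfl⟩ := (mem_filter.1 hω).2.exists_eq_pad
    exact ⟨a, mem_range.2 (by omega), rfl⟩

lemma sum_filter_not_isStable_eq (F : (Fin n → Bool) → M) :
    ∑ ω ∈ univ.filter (fun ω => ¬ IsStable n ω), F ω =
      ∑ r ∈ range (n - 1), ∑ a ∈ range (n - 1 - r), ∑ x : Fin r → Bool,
        F (pad n a (r + 2) (special r x)) := by
  have hsigma : ∑ r ∈ range (n - 1), ∑ a ∈ range (n - 1 - r), ∑ x : Fin r → Bool,
      F (pad n a (r + 2) (special r x)) =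
      ∑ z ∈ (range (n - 1)).sigma (fun r => range (n - 1 - r) ×ˢ (univ : Finset (Fin r → Bool))),
        F (pad n z.2.1 (z.1 + 2) (special z.1 z.2.2)) := by
    simp only [sum_sigma, sum_product]
  rw [hsigma]
  refine (sum_bij (fun z _ => pad n z.2.1 (z.1 + 2) (special z.1 z.2.2)) ?_ ?_ ?_
    fun _ _ => rfl).symm
  · rintro ⟨r, a, x⟩ hz
    simp only [mem_sigma, mem_product, mem_range] at hz
    exact mem_filter.2 ⟨mem_univ _,
      (isStable_pad_iff (show a + (r + 2) ≤ n by omega) _).not.2 (not_isStable_special _)⟩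
  · rintro ⟨r, a, x⟩ hz ⟨r', a', x'⟩ hz' h
    simp only [mem_sigma, mem_product, mem_range] at hz hz'
    exact pad_special_inj (by omega) (by omega) h
  · intro ω hω
    obtain ⟨r, a, x, h, rfl⟩ := exists_eq_pad_special_of_not_isStable (mem_filter.1 hω).2
    refine ⟨⟨r, a, x⟩, ?_, rfl⟩
    simp only [mem_sigma, mem_product, mem_range, mem_univ, and_true]
    omega

end Reindexing

lemma stabTime_eq_zero_of_isStable {n : ℕ} {ω : Fin n → Bool} (h : IsStable n ω) :
    stabTime n ω = 0 :=
  Nat.sInf_eq_zero.2 (Or.inl h)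

lemma sum_range_pow_mul_one_sub_pow {p : ℝ} (hp : p ≠ 1 / 2) (m : ℕ) :
    ∑ a ∈ range m, p ^ a * (1 - p) ^ (m - 1 - a) = (p ^ m - (1 - p) ^ m) / (2 * p - 1) := by
  rw [eq_div_iff (by contrapose! hp; linarith), show 2 * p - 1 = p - (1 - p) by ring]
  exact geom_sum₂_mul p (1 - p) m

section Law

variable (p : ℝ) (n : ℕ) [DecidablePred (IsStable n)] (g : ℕ → ℝ)

lemma sum_filter_isStable_weight_mul :
    ∑ ω ∈ univ.filter (IsStable n), weight p n ω * g (stabTime n ω) =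
      (∑ a ∈ range (n + 1), p ^ a * (1 - p) ^ (n + 1 - 1 - a)) * g 0 := by
  rw [sum_filter_isStable_eq, sum_mul]
  refine sum_congr rfl fun a ha => ?_
  have han : a + 0 ≤ n := by simp at ha; omega
  rw [weight_pad han, stabTime_pad han, stabTime_eq_zero_of_isStable (isStable_zero _),
    Nat.add_sub_cancel, Nat.sub_zero]
  simp [weight]

lemma sum_filter_not_isStable_weight_mul :
    ∑ ω ∈ univ.filter (fun ω => ¬ IsStable n ω), weight p n ω * g (stabTime n ω) =
      ∑ r ∈ range (n - 1), (∑ a ∈ range (n - 1 - r), p ^ a * (1 - p) ^ (n - 1 - r - 1 - a)) *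
        ((1 - p) * p * ∑ x : Fin r → Bool, weight p r x * g (stabTime (r + 2) (special r x))) := by
  rw [sum_filter_not_isStable_eq]
  refine sum_congr rfl fun r hr => ?_
  rw [sum_mul]
  refine sum_congr rfl fun a ha => ?_
  rw [mul_sum, mul_sum]
  refine sum_congr rfl fun x _ => ?_
  simp only [mem_range] at hr ha
  rw [weight_pad (by omega), weight_special, stabTime_pad (by omega),
    show n - a - (r + 2) = n - 1 - r - 1 - a by omega]
  ring

end Law

theorem stmt12_general (n : ℕ) (t : ℕ) (p : ℝ) (hne : p ≠ 1 / 2) :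
    ∑ ω : Fin n → Bool,
        weight p n ω * (if stabTime n ω = t then (1 : ℝ) else 0)
      = (p ^ (n + 1) - (1 - p) ^ (n + 1)) / (2 * p - 1)
            * (if t = 0 then (1 : ℝ) else 0)
        + ∑ r ∈ Finset.range (n - 1),
            (((1 - p) * p ^ (n - r) - p * (1 - p) ^ (n - r)) / (2 * p - 1)) *
              ∑ x : Fin r → Bool,
                weight p r x *
                  (if stabTime (r + 2) (special r x) = t then (1 : ℝ) else 0) := by
  classical
  let g : ℕ → ℝ := fun s => if s = t then 1 else 0
  rw [← sum_filter_add_sum_filter_not univ (IsStable n), sum_filter_isStable_weight_mul p n g,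
    sum_filter_not_isStable_weight_mul p n g, sum_range_pow_mul_one_sub_pow hne]
  congr 1
  · simp only [g, eq_comm]
  · refine sum_congr rfl fun r hr => ?_
    rw [sum_range_pow_mul_one_sub_pow hne, show n - r = n - 1 - r + 1 by simp at hr; omega]
    field_simp
    ring

/-- For `p ≠ 1/2` the law `μ_n^p` of the stabilization time decomposes as
`μ_n^p = ((p^{n+1} - (1-p)^{n+1})/(2p-1)) δ_0
  + Σ_{r=0}^{n-2} (((1-p)p^{n-r} - p(1-p)^{n-r})/(2p-1)) μ̃_{r+2}^p`. -/
theorem stmt12 (n : ℕ) (t : ℕ) (p : ℝ) (hp : p ∈ Set.Ioo (0 : ℝ) 1)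
    (hne : p ≠ 1 / 2) :
    ∑ ω : Fin n → Bool,
        weight p n ω * (if stabTime n ω = t then (1 : ℝ) else 0)
      = (p ^ (n + 1) - (1 - p) ^ (n + 1)) / (2 * p - 1)
            * (if t = 0 then (1 : ℝ) else 0)
        + ∑ r ∈ Finset.range (n - 1),
            (((1 - p) * p ^ (n - r) - p * (1 - p) ^ (n - r)) / (2 * p - 1)) *
              ∑ x : Fin r → Bool,
                weight p r x *
                  (if stabTime (r + 2) (special r x) = t then (1 : ℝ) else 0) :=
  stmt12_general n t p hne
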